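/- arXiv:2605.12561 — 3 statements merged into one kernel-verified Lean document; each statement's English description precedes it below -/
import Mathlib

section
/- Let n be a positive integer, P a symmetric positive-definite n×n real matrix, and M an n×n real matrix such that P − Mᵀ P M is positive definite. Then every eigenvalue of M (viewed as a matrix over ℂ) has absolute value strictly less than 1. -/
/-!
If `M v = μ v` with `v ≠ 0`, then `vᴴ (P - Mᴴ P M) v = (1 - ‖μ‖²) vᴴ P v`; the left side is
positive and `vᴴ P v ≥ 0`, so `‖μ‖ < 1`. To apply this over `ℂ`, note that a real positive definite
matrix stays positive definite over `ℂ`: the Hermitian form at `a + i b` is `aᵀ P a + bᵀ P b`.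
-/

open Matrix
open scoped ComplexOrder

namespace Matrix

variable {𝕜 ι : Type*} [RCLike 𝕜] [Fintype ι]

lemma re_star_dotProduct_map_mulVec (A : Matrix ι ι ℝ) (x : ι → 𝕜) :
    RCLike.re (star x ⬝ᵥ A.map (algebraMap ℝ 𝕜) *ᵥ x) =
      (RCLike.re ∘ x) ⬝ᵥ A *ᵥ (RCLike.re ∘ x) + (RCLike.im ∘ x) ⬝ᵥ A *ᵥ (RCLike.im ∘ x) := by
  simp only [dotProduct, mulVec, Finset.mul_sum, map_sum, ← Finset.sum_add_distrib]
  refine Finset.sum_congr rfl fun i _ ↦ Finset.sum_congr rfl fun j _ ↦ ?_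
  simp only [Pi.star_apply, map_apply, Function.comp_apply, RCLike.mul_re, RCLike.mul_im,
    RCLike.star_def, RCLike.conj_re, RCLike.conj_im, RCLike.algebraMap_eq_ofReal,
    RCLike.ofReal_re, RCLike.ofReal_im]
  ring

lemma PosDef.map_algebraMap {A : Matrix ι ι ℝ} (hA : A.PosDef) :
    (A.map (algebraMap ℝ 𝕜)).PosDef := by
  have hherm : (A.map (algebraMap ℝ 𝕜)).IsHermitian :=
    hA.isHermitian.map _ fun r ↦ (RCLike.conj_ofReal r).symm
  refine .of_dotProduct_mulVec_pos hherm fun x hx ↦ RCLike.pos_iff.mpr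
    ⟨?_, hherm.im_star_dotProduct_mulVec_self x⟩
  rw [re_star_dotProduct_map_mulVec]
  have hre := hA.posSemidef.dotProduct_mulVec_nonneg (RCLike.re ∘ x)
  have him := hA.posSemidef.dotProduct_mulVec_nonneg (RCLike.im ∘ x)
  simp only [star_trivial] at hre him
  by_cases h : RCLike.re ∘ x = 0
  · have : RCLike.im ∘ x ≠ 0 := fun h' ↦ hx <| funext fun i ↦
      RCLike.ext (by simpa using congrFun h i) (by simpa using congrFun h' i)
    simpa [h] using hA.dotProduct_mulVec_pos this
  · have := hA.dotProduct_mulVec_pos h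
    simp only [star_trivial] at this
    linarith

lemma star_dotProduct_conjTranspose_mul_mul_mulVec (P M : Matrix ι ι 𝕜) (v : ι → 𝕜) :
    star v ⬝ᵥ (Mᴴ * P * M) *ᵥ v = star (M *ᵥ v) ⬝ᵥ P *ᵥ (M *ᵥ v) := by
  rw [star_mulVec, ← dotProduct_mulVec, mulVec_mulVec, mulVec_mulVec, Matrix.mul_assoc]

theorem norm_lt_one_of_posDef_sub_conjTranspose_mul_mul {P M : Matrix ι ι 𝕜}
    (hP : P.PosSemidef) (hPM : (P - Mᴴ * P * M).PosDef) {μ : 𝕜} {v : ι → 𝕜} (hv : v ≠ 0)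
    (hMv : M *ᵥ v = μ • v) : ‖μ‖ < 1 := by
  have hform : star v ⬝ᵥ (P - Mᴴ * P * M) *ᵥ v =
      ((1 - ‖μ‖ ^ 2 : ℝ) : 𝕜) * (star v ⬝ᵥ P *ᵥ v) := by
    rw [sub_mulVec, dotProduct_sub, star_dotProduct_conjTranspose_mul_mul_mulVec, hMv,
      star_smul, mulVec_smul, smul_dotProduct, dotProduct_smul, smul_smul, smul_eq_mul,
      RCLike.star_def, RCLike.conj_mul]
    push_cast
    ring
  have hpos := RCLike.pos_iff.mp (hform ▸ hPM.dotProduct_mulVec_pos hv)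
  have hc := (RCLike.nonneg_iff.mp (hP.dotProduct_mulVec_nonneg v)).1
  rw [RCLike.re_ofReal_mul] at hpos
  have : ‖μ‖ ^ 2 < 1 := by nlinarith [pos_of_mul_pos_left hpos.1 hc]
  exact (sq_lt_one_iff₀ (norm_nonneg μ)).mp this

end Matrix

theorem spectral_radius_lt_one_of_lyapunov_general
    (n : ℕ) (P M : Matrix (Fin n) (Fin n) ℝ)
    (hP : P.PosDef) (hdisc : (P - Mᵀ * P * M).PosDef) :
    ∀ μ : ℂ, ((M.map (algebraMap ℝ ℂ)).charpoly.IsRoot μ) → ‖μ‖ < 1 := by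
  intro μ hμ
  have heig : Module.End.HasEigenvalue (toLin' (M.map (algebraMap ℝ ℂ))) μ := by
    rwa [Module.End.hasEigenvalue_iff_isRoot_charpoly, charpoly_toLin']
  obtain ⟨v, hv⟩ := heig.exists_hasEigenvector
  have hmap : (P - Mᵀ * P * M).map (algebraMap ℝ ℂ) =
      P.map (algebraMap ℝ ℂ) - (M.map (algebraMap ℝ ℂ))ᴴ * P.map (algebraMap ℝ ℂ) *
        M.map (algebraMap ℝ ℂ) := by
    rw [Matrix.map_sub _ (map_sub _), Matrix.map_mul, Matrix.map_mul,
      ← conjTranspose_map _ fun r ↦ (RCLike.conj_ofReal r).symm,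
      conjTranspose_eq_transpose_of_trivial]
  refine norm_lt_one_of_posDef_sub_conjTranspose_mul_mul hP.map_algebraMap.posSemidef
    (hmap ▸ hdisc.map_algebraMap) hv.2 ?_
  simpa using hv.apply_eq_smul

/-- If `P` is symmetric positive definite and `P − Mᵀ P M` is positive
definite, then every complex eigenvalue of `M` (root of the characteristic polynomial of `M`
regarded as a matrix over `ℂ`) has absolute value strictly less than `1`. -/
theorem spectral_radius_lt_one_of_lyapunov
    (n : ℕ) (hn : 0 < n) (P M : Matrix (Fin n) (Fin n) ℝ)
    (hP : P.PosDef) (hdisc : (P - Mᵀ * P * M).PosDef) :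
    ∀ μ : ℂ, ((M.map (algebraMap ℝ ℂ)).charpoly.IsRoot μ) → ‖μ‖ < 1 :=
  spectral_radius_lt_one_of_lyapunov_general n P M hP hdisc
end

section
/- Let n and m be positive integers, A an n×n real matrix, B an n×m real matrix, and Q, R symmetric positive-definite matrices. Suppose the symmetric positive-definite matrix P solves the continuous-time algebraic Riccati equation Aᵀ P + P A − P B R⁻¹ Bᵀ P + Q = 0, set K = R⁻¹ Bᵀ P, and let M(τ) = exp(A τ) − (∫₀^τ exp(A s) ds)·B·K. For x ∈ ℝⁿ define ΔV(τ) = (M(τ)·x)ᵀ P (M(τ)·x) − xᵀ P x. Then ΔV(0) = 0, ΔV is differentiable, and its derivative at τ = 0 equals −xᵀ (Q + Kᵀ R K) x, which is strictly negative whenever x ≠ 0. -/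
open Matrix MeasureTheory

/-- The ZOH closed-loop transition matrix
`M(τ) = exp(A τ) − (∫₀^τ exp(A s) ds) · B · K`, with entrywise Bochner integral. -/
noncomputable def zohMatrix {n m : ℕ} (A : Matrix (Fin n) (Fin n) ℝ)
    (B : Matrix (Fin n) (Fin m) ℝ) (K : Matrix (Fin m) (Fin n) ℝ) (τ : ℝ) :
    Matrix (Fin n) (Fin n) ℝ :=
  NormedSpace.exp (τ • A) -
    (Matrix.of fun i j => ∫ s in (0:ℝ)..τ, (NormedSpace.exp (s • A)) i j) * B * K

/-! The derivative of `M(τ)` is `exp(A τ) (A − B K)`, so `ΔV'(0) = xᵀ ((A − BK)ᵀ P + P (A − BK)) x`.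
With `K = R⁻¹ Bᵀ P` the Riccati equation turns the bracket into `−(Q + Kᵀ R K)`, the closed-loop
Lyapunov identity, and `Q + Kᵀ R K` is positive definite because `Q` is and `Kᵀ R K` is
positive semidefinite. -/

section Calculus

variable {ι κ : Type*} [Fintype κ] {t : ℝ}

theorem HasDerivAt.dotProduct [Fintype ι] {u w : ℝ → ι → ℝ} {u' w' : ι → ℝ}
    (hu : HasDerivAt u u' t) (hw : HasDerivAt w w' t) :
    HasDerivAt (fun τ => u τ ⬝ᵥ w τ) (u' ⬝ᵥ w t + u t ⬝ᵥ w') t := by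
  rw [_root_.dotProduct, _root_.dotProduct, ← Finset.sum_add_distrib]
  exact HasDerivAt.fun_sum fun i _ => (hasDerivAt_pi.1 hu i).mul (hasDerivAt_pi.1 hw i)

theorem hasDerivAt_mulVec_of_hasDerivAt_apply {F : ℝ → Matrix ι κ ℝ} {F' : Matrix ι κ ℝ}
    (hF : ∀ i j, HasDerivAt (fun τ => F τ i j) (F' i j) t) (v : κ → ℝ) :
    HasDerivAt (fun τ => F τ *ᵥ v) (F' *ᵥ v) t :=
  hasDerivAt_pi.2 fun i => HasDerivAt.fun_sum fun j _ => (hF i j).mul_const (v j)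

theorem HasDerivAt.const_mulVec {y : ℝ → κ → ℝ} {y' : κ → ℝ} (hy : HasDerivAt y y' t)
    (P : Matrix ι κ ℝ) : HasDerivAt (fun τ => P *ᵥ y τ) (P *ᵥ y') t :=
  hasDerivAt_pi.2 fun i => HasDerivAt.fun_sum fun j _ => (hasDerivAt_pi.1 hy j).const_mul (P i j)

theorem HasDerivAt.dotProduct_mulVec {y : ℝ → κ → ℝ} {y' : κ → ℝ} (hy : HasDerivAt y y' t)
    (P : Matrix κ κ ℝ) :
    HasDerivAt (fun τ => y τ ⬝ᵥ P *ᵥ y τ) (y' ⬝ᵥ P *ᵥ y t + y t ⬝ᵥ P *ᵥ y') t :=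
  hy.dotProduct (hy.const_mulVec P)

theorem hasDerivAt_intervalIntegral_apply_mulVec {f : ℝ → Matrix ι κ ℝ}
    (hf : ∀ i j, Continuous fun s => f s i j) (v : κ → ℝ) :
    HasDerivAt (fun τ => (of fun i j => ∫ s in (0:ℝ)..τ, f s i j) *ᵥ v) (f t *ᵥ v) t :=
  hasDerivAt_mulVec_of_hasDerivAt_apply
    (fun i j => ((hf i j).integral_hasStrictDerivAt 0 t).hasDerivAt) v

end Calculus

section MatrixExp

variable {ι : Type*} [Fintype ι] [DecidableEq ι]

attribute [local instance] Matrix.linftyOpNormedAddCommGroup Matrix.linftyOpNormedRing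
  Matrix.linftyOpNormedAlgebra

theorem hasDerivAt_exp_smul_apply (A : Matrix ι ι ℝ) (t : ℝ) (i j : ι) :
    HasDerivAt (fun τ : ℝ => NormedSpace.exp (τ • A) i j) ((NormedSpace.exp (t • A) * A) i j) t :=
  (entryLinearMap ℝ ℝ i j).toContinuousLinearMap.hasFDerivAt.comp_hasDerivAt t
    (hasDerivAt_exp_smul_const A t)

end MatrixExp

section ZOH

variable {n m : ℕ} (A : Matrix (Fin n) (Fin n) ℝ) (B : Matrix (Fin n) (Fin m) ℝ)
  (K : Matrix (Fin m) (Fin n) ℝ)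

theorem zohMatrix_zero : zohMatrix A B K 0 = 1 := by
  ext i j
  simp [zohMatrix, Matrix.mul_apply]

theorem hasDerivAt_zohMatrix_mulVec (x : Fin n → ℝ) (t : ℝ) :
    HasDerivAt (fun τ => zohMatrix A B K τ *ᵥ x)
      ((NormedSpace.exp (t • A) * (A - B * K)) *ᵥ x) t := by
  have hexp := hasDerivAt_mulVec_of_hasDerivAt_apply (hasDerivAt_exp_smul_apply A t) x
  have hcont (i j : Fin n) : Continuous fun s : ℝ => NormedSpace.exp (s • A) i j :=
    continuous_iff_continuousAt.2 fun s => (hasDerivAt_exp_smul_apply A s i j).continuousAt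
  have hint := hasDerivAt_intervalIntegral_apply_mulVec (t := t) hcont ((B * K) *ᵥ x)
  have hsplit : (fun τ => zohMatrix A B K τ *ᵥ x) = fun τ => NormedSpace.exp (τ • A) *ᵥ x -
      (of fun i j => ∫ s in (0:ℝ)..τ, NormedSpace.exp (s • A) i j) *ᵥ ((B * K) *ᵥ x) := by
    funext τ
    simp only [zohMatrix, sub_mulVec, mulVec_mulVec, Matrix.mul_assoc]
  rw [hsplit, Matrix.mul_sub, sub_mulVec, ← mulVec_mulVec x _ (B * K)]
  exact hexp.sub hint

end ZOH

theorem dotProduct_transpose_mul_add_mul_mulVec {α ι : Type*} [CommSemiring α] [Fintype ι]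
    (N P : Matrix ι ι α) (x : ι → α) :
    x ⬝ᵥ (Nᵀ * P + P * N) *ᵥ x = (N *ᵥ x) ⬝ᵥ P *ᵥ x + x ⬝ᵥ P *ᵥ (N *ᵥ x) := by
  rw [add_mulVec, dotProduct_add, ← mulVec_mulVec, ← mulVec_mulVec, dotProduct_mulVec x Nᵀ,
    vecMul_transpose]

theorem care_closedLoop_lyapunov {α ι κ : Type*} [CommRing α] [Fintype ι] [Fintype κ]
    [DecidableEq κ] {A Q P : Matrix ι ι α} {B : Matrix ι κ α} {R : Matrix κ κ α}
    {K : Matrix κ ι α} (hP : P.IsSymm) (hR : R.IsSymm) (hRdet : IsUnit R.det)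
    (hCARE : Aᵀ * P + P * A - P * B * R⁻¹ * Bᵀ * P + Q = 0) (hK : K = R⁻¹ * Bᵀ * P) :
    (A - B * K)ᵀ * P + P * (A - B * K) = -(Q + Kᵀ * R * K) := by
  have hKT : Kᵀ = P * B * R⁻¹ := by
    rw [hK, transpose_mul, transpose_mul, transpose_transpose, hP.eq, transpose_nonsing_inv,
      hR.eq, Matrix.mul_assoc]
  have hKRK : Kᵀ * R * K = P * B * R⁻¹ * Bᵀ * P := by
    rw [hKT, hK, Matrix.mul_assoc (P * B) R⁻¹ R, nonsing_inv_mul R hRdet, Matrix.mul_one]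
    simp only [Matrix.mul_assoc]
  calc (A - B * K)ᵀ * P + P * (A - B * K)
      = (Aᵀ * P + P * A - P * B * R⁻¹ * Bᵀ * P + Q) - (Q + P * B * R⁻¹ * Bᵀ * P) := by
        rw [transpose_sub, transpose_mul, hKT, hK]
        simp only [sub_mul, Matrix.mul_sub, Matrix.mul_assoc]
        abel
    _ = -(Q + Kᵀ * R * K) := by rw [hCARE, hKRK, zero_sub]

theorem posDef_add_transpose_mul_mul {ι κ : Type*} [Fintype ι] [Fintype κ]
    {Q : Matrix ι ι ℝ} {R : Matrix κ κ ℝ} (hQ : Q.PosDef) (hR : R.PosSemidef)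
    (K : Matrix κ ι ℝ) : (Q + Kᵀ * R * K).PosDef :=
  hQ.add_posSemidef (hR.conjTranspose_mul_mul_same K)

theorem care_deltaV_deriv_at_zero_general
    (n m : ℕ)
    (A : Matrix (Fin n) (Fin n) ℝ) (B : Matrix (Fin n) (Fin m) ℝ)
    (Q P : Matrix (Fin n) (Fin n) ℝ) (R : Matrix (Fin m) (Fin m) ℝ)
    (hQ : Q.PosDef) (hR : R.PosDef) (hP : P.PosDef)
    (hCARE : Aᵀ * P + P * A - P * B * R⁻¹ * Bᵀ * P + Q = 0)
    (K : Matrix (Fin m) (Fin n) ℝ) (hK : K = R⁻¹ * Bᵀ * P)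
    (x : Fin n → ℝ)
    (ΔV : ℝ → ℝ)
    (hΔV : ΔV = fun τ =>
      (zohMatrix A B K τ *ᵥ x) ⬝ᵥ P *ᵥ (zohMatrix A B K τ *ᵥ x) - x ⬝ᵥ P *ᵥ x) :
    ΔV 0 = 0 ∧ (∀ τ : ℝ, DifferentiableAt ℝ ΔV τ) ∧
      HasDerivAt ΔV (-(x ⬝ᵥ (Q + Kᵀ * R * K) *ᵥ x)) 0 ∧
      (x ≠ 0 → -(x ⬝ᵥ (Q + Kᵀ * R * K) *ᵥ x) < 0) := by
  have hderiv (t : ℝ) : HasDerivAt ΔV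
      ((NormedSpace.exp (t • A) * (A - B * K)) *ᵥ x ⬝ᵥ P *ᵥ (zohMatrix A B K t *ᵥ x) +
        zohMatrix A B K t *ᵥ x ⬝ᵥ P *ᵥ ((NormedSpace.exp (t • A) * (A - B * K)) *ᵥ x)) t := by
    subst hΔV
    exact ((hasDerivAt_zohMatrix_mulVec A B K x t).dotProduct_mulVec P).sub_const (x ⬝ᵥ P *ᵥ x)
  have hlyap := care_closedLoop_lyapunov (isHermitian_iff_isSymm.1 hP.isHermitian)
    (isHermitian_iff_isSymm.1 hR.isHermitian) hR.det_pos.ne'.isUnit hCARE hK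
  refine ⟨by simp [hΔV, zohMatrix_zero], fun t => (hderiv t).differentiableAt, ?_, fun hx => ?_⟩
  · convert hderiv 0 using 1
    rw [← dotProduct_neg, ← neg_mulVec, ← hlyap, dotProduct_transpose_mul_add_mul_mulVec]
    simp [zohMatrix_zero]
  · exact neg_neg_of_pos
      ((posDef_add_transpose_mul_mul hQ hR.posSemidef K).dotProduct_mulVec_pos hx)

/-- Under the CARE, with `K = R⁻¹ Bᵀ P` and
`ΔV(τ) = (M(τ)x)ᵀ P (M(τ)x) − xᵀ P x`:  `ΔV(0) = 0`, `ΔV` is differentiable, its derivative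
at `τ = 0` equals `−xᵀ (Q + Kᵀ R K) x`, and this value is strictly negative whenever `x ≠ 0`. -/
theorem care_deltaV_deriv_at_zero
    (n m : ℕ) (hn : 0 < n) (hm : 0 < m)
    (A : Matrix (Fin n) (Fin n) ℝ) (B : Matrix (Fin n) (Fin m) ℝ)
    (Q P : Matrix (Fin n) (Fin n) ℝ) (R : Matrix (Fin m) (Fin m) ℝ)
    (hQ : Q.PosDef) (hR : R.PosDef) (hP : P.PosDef)
    (hCARE : Aᵀ * P + P * A - P * B * R⁻¹ * Bᵀ * P + Q = 0)
    (K : Matrix (Fin m) (Fin n) ℝ) (hK : K = R⁻¹ * Bᵀ * P)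
    (x : Fin n → ℝ)
    (ΔV : ℝ → ℝ)
    (hΔV : ΔV = fun τ =>
      (zohMatrix A B K τ *ᵥ x) ⬝ᵥ P *ᵥ (zohMatrix A B K τ *ᵥ x) - x ⬝ᵥ P *ᵥ x) :
    ΔV 0 = 0 ∧ (∀ τ : ℝ, DifferentiableAt ℝ ΔV τ) ∧
      HasDerivAt ΔV (-(x ⬝ᵥ (Q + Kᵀ * R * K) *ᵥ x)) 0 ∧
      (x ≠ 0 → -(x ⬝ᵥ (Q + Kᵀ * R * K) *ᵥ x) < 0) :=
  care_deltaV_deriv_at_zero_general n m A B Q P R hQ hR hP hCARE K hK x ΔV hΔV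
end

section
/- Let n and m be positive integers, A an n×n real matrix, B an n×m real matrix, and Q, R symmetric positive-definite matrices of sizes n×n and m×m. Suppose the symmetric positive-definite matrix P solves the continuous-time algebraic Riccati equation Aᵀ P + P A − P B R⁻¹ Bᵀ P + Q = 0, and set K = R⁻¹ Bᵀ P. Then A − B K is Hurwitz: every eigenvalue of A − B K, regarded as a matrix over ℂ, has strictly negative real part. -/
/-!
Substituting `K = R⁻¹ Bᵀ P` into the Riccati equation turns it into the Lyapunov equation
`(A - B K)ᵀ P + P (A - B K) = -(Q + P B R⁻¹ Bᵀ P)` whose right-hand side is negative definite.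
If `v` is a complex eigenvector of `A - B K` with eigenvalue `μ`, evaluating both sides at `v`
gives `2 Re μ · v* P v = -v* (Q + P B R⁻¹ Bᵀ P) v < 0`, and `v* P v > 0` forces `Re μ < 0`.
-/

open scoped ComplexOrder

namespace Matrix

variable {n : Type*} [Fintype n]

theorem exists_mulVec_eq_smul_of_isRoot_charpoly {K : Type*} [Field K] [DecidableEq n]
    {M : Matrix n n K} {μ : K} (h : M.charpoly.IsRoot μ) :
    ∃ v : n → K, v ≠ 0 ∧ M *ᵥ v = μ • v := by
  rw [← charpoly_toLin', ← Module.End.hasEigenvalue_iff_isRoot_charpoly] at h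
  obtain ⟨v, hv⟩ := h.exists_hasEigenvector
  exact ⟨v, hv.2, by simpa using hv.apply_eq_smul⟩

section RCLike

variable {𝕜 : Type*} [RCLike 𝕜]

theorem re_star_dotProduct_map_algebraMap_mulVec (L : Matrix n n ℝ) (v : n → 𝕜) :
    RCLike.re (star v ⬝ᵥ L.map (algebraMap ℝ 𝕜) *ᵥ v)
      = (fun i => RCLike.re (v i)) ⬝ᵥ L *ᵥ (fun i => RCLike.re (v i))
        + (fun i => RCLike.im (v i)) ⬝ᵥ L *ᵥ (fun i => RCLike.im (v i)) := by
  simp only [dotProduct, mulVec, Pi.star_apply, map_apply, Finset.mul_sum, map_sum,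
    ← Finset.sum_add_distrib]
  refine Finset.sum_congr rfl fun i _ => Finset.sum_congr rfl fun j _ => ?_
  simp [RCLike.mul_re]

theorem PosDef.map_algebraMap_s18 {L : Matrix n n ℝ} (hL : L.PosDef) :
    (L.map (algebraMap ℝ 𝕜)).PosDef := by
  have hH : (L.map (algebraMap ℝ 𝕜)).IsHermitian := hL.isHermitian.map _ fun r => by simp
  refine PosDef.of_dotProduct_mulVec_pos hH fun v hv =>
    RCLike.pos_iff.2 ⟨?_, hH.im_star_dotProduct_mulVec_self v⟩
  have hpos (x : n → ℝ) (hx : x ≠ 0) : 0 < x ⬝ᵥ L *ᵥ x := by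
    simpa using hL.dotProduct_mulVec_pos hx
  have hnonneg (x : n → ℝ) : 0 ≤ x ⬝ᵥ L *ᵥ x := by
    simpa using hL.posSemidef.dotProduct_mulVec_nonneg x
  rw [re_star_dotProduct_map_algebraMap_mulVec]
  obtain hre | him : (fun i => RCLike.re (v i)) ≠ 0 ∨ (fun i => RCLike.im (v i)) ≠ 0 := by
    by_contra! h
    exact hv <| funext fun i =>
      RCLike.ext (by simpa using congrFun h.1 i) (by simpa using congrFun h.2 i)
  · linarith [hpos _ hre, hnonneg fun i => RCLike.im (v i)]
  · linarith [hpos _ him, hnonneg fun i => RCLike.re (v i)]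

theorem re_lt_zero_of_lyapunov {M P L : Matrix n n 𝕜} (hP : P.PosDef) (hL : L.PosDef)
    (hML : Mᴴ * P + P * M = -L) {μ : 𝕜} {v : n → 𝕜} (hv : v ≠ 0) (hMv : M *ᵥ v = μ • v) :
    RCLike.re μ < 0 := by
  have hMP : star v ⬝ᵥ (Mᴴ * P) *ᵥ v = star μ * (star v ⬝ᵥ P *ᵥ v) := by
    rw [← mulVec_mulVec, dotProduct_mulVec, vecMul_conjTranspose, star_star, hMv, star_smul,
      smul_dotProduct, smul_eq_mul]
  have hPM : star v ⬝ᵥ (P * M) *ᵥ v = μ * (star v ⬝ᵥ P *ᵥ v) := by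
    rw [← mulVec_mulVec, hMv, mulVec_smul, dotProduct_smul, smul_eq_mul]
  have hquad : (star μ + μ) * (star v ⬝ᵥ P *ᵥ v) = -(star v ⬝ᵥ L *ᵥ v) := by
    rw [← dotProduct_neg, ← neg_mulVec, ← hML, add_mulVec, dotProduct_add, hMP, hPM, add_mul]
  have hre : 2 * RCLike.re μ * RCLike.re (star v ⬝ᵥ P *ᵥ v)
      = -RCLike.re (star v ⬝ᵥ L *ᵥ v) := by
    simpa [RCLike.star_def, add_comm (starRingEnd 𝕜 μ), RCLike.add_conj, mul_assoc]
      using congrArg RCLike.re hquad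
  nlinarith [hP.re_dotProduct_pos hv, hL.re_dotProduct_pos hv]

end RCLike

theorem closedLoop_lyapunov_of_care {m α : Type*} [Fintype m] [CommRing α]
    {A P Q : Matrix n n α} {B : Matrix n m α} {S : Matrix m m α} (hP : P.IsSymm)
    (hS : S.IsSymm) (hCARE : Aᵀ * P + P * A - P * B * S * Bᵀ * P + Q = 0) :
    (A - B * (S * Bᵀ * P))ᵀ * P + P * (A - B * (S * Bᵀ * P))
      = -(Q + P * B * S * Bᵀ * P) := by
  rw [← sub_eq_zero, ← hCARE]
  simp only [transpose_sub, transpose_mul, transpose_transpose, hP.eq, hS.eq, Matrix.sub_mul,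
    Matrix.mul_sub, Matrix.mul_assoc]
  abel

def IsHurwitz [DecidableEq n] (M : Matrix n n ℝ) : Prop :=
  ∀ μ : ℂ, (M.map (algebraMap ℝ ℂ)).charpoly.IsRoot μ → μ.re < 0

theorem isHurwitz_of_lyapunov [DecidableEq n] {M P L : Matrix n n ℝ} (hP : P.PosDef)
    (hL : L.PosDef) (hML : Mᵀ * P + P * M = -L) : M.IsHurwitz := by
  intro μ hμ
  obtain ⟨v, hv, hMv⟩ := exists_mulVec_eq_smul_of_isRoot_charpoly hμ
  refine re_lt_zero_of_lyapunov hP.map_algebraMap_s18 hL.map_algebraMap_s18 ?_ hv hMv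
  rw [← conjTranspose_map _ fun r => by simp, conjTranspose_eq_transpose_of_trivial,
    ← Matrix.map_mul, ← Matrix.map_mul, ← Matrix.map_add _ (map_add _), hML,
    Matrix.map_neg _ (map_neg _)]

end Matrix

open Matrix

theorem care_closed_loop_hurwitz_general
    (n m : ℕ)
    (A : Matrix (Fin n) (Fin n) ℝ) (B : Matrix (Fin n) (Fin m) ℝ)
    (Q P : Matrix (Fin n) (Fin n) ℝ) (R : Matrix (Fin m) (Fin m) ℝ)
    (hQ : Q.PosDef) (hR : R.PosDef) (hP : P.PosDef)
    (hCARE : Aᵀ * P + P * A - P * B * R⁻¹ * Bᵀ * P + Q = 0) :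
    ∀ μ : ℂ,
      (((A - B * (R⁻¹ * Bᵀ * P)).map (algebraMap ℝ ℂ)).charpoly.IsRoot μ) → μ.re < 0 := by
  have hPsymm : P.IsSymm := isHermitian_iff_isSymm.1 hP.isHermitian
  have hRinvSymm : R⁻¹.IsSymm := isHermitian_iff_isSymm.1 hR.inv.isHermitian
  have hgain : (P * B * R⁻¹ * Bᵀ * P).PosSemidef := by
    simpa [hPsymm.eq, Matrix.mul_assoc] using
      hR.inv.posSemidef.conjTranspose_mul_mul_same (Bᵀ * P)
  exact isHurwitz_of_lyapunov hP (hQ.add_posSemidef hgain)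
    (closedLoop_lyapunov_of_care hPsymm hRinvSymm hCARE)

/-- If the symmetric positive-definite `P` solves the CARE
`Aᵀ P + P A − P B R⁻¹ Bᵀ P + Q = 0` with `Q, R` symmetric positive definite, and
`K = R⁻¹ Bᵀ P`, then `A − B K` is Hurwitz: every complex eigenvalue (root of the
characteristic polynomial over `ℂ`) has strictly negative real part. -/
theorem care_closed_loop_hurwitz
    (n m : ℕ) (hn : 0 < n) (hm : 0 < m)
    (A : Matrix (Fin n) (Fin n) ℝ) (B : Matrix (Fin n) (Fin m) ℝ)
    (Q P : Matrix (Fin n) (Fin n) ℝ) (R : Matrix (Fin m) (Fin m) ℝ)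
    (hQ : Q.PosDef) (hR : R.PosDef) (hP : P.PosDef)
    (hCARE : Aᵀ * P + P * A - P * B * R⁻¹ * Bᵀ * P + Q = 0) :
    ∀ μ : ℂ,
      (((A - B * (R⁻¹ * Bᵀ * P)).map (algebraMap ℝ ℂ)).charpoly.IsRoot μ) → μ.re < 0 :=
  care_closed_loop_hurwitz_general n m A B Q P R hQ hR hP hCARE
end
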